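/- arXiv:1108.6310 — 9 statements merged into one kernel-verified Lean document; each statement's English description precedes it below -/
import Mathlib

section
/- Let p be an odd prime and let a, c, d be nonzero elements of F_p. Then the system a·U² + c·W² = d·Z², U·W = V² has a nontrivial solution (u, v, w, z) ∈ F_p⁴, i.e., a solution with not all coordinates zero. -/
/-
Put u = x², v = xy, w = y²: it suffices to find (x, y) ≠ 0 with d(ax⁴ + cy⁴) a square.
This is immediate if da or dc is a square; otherwise c = af² for some f ≠ 0, and we need
an x with x⁴ + f² zero or a non-square. If x⁴ + f² were a nonzero square for every x, the curve
y² = x⁴ + f² would have 2q points over the field with q elements. But (x, y) ↦ t = y − x² maps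
them into Fˣ with fibres of size at most 2, because (y − x²)(y + x²) = f² gives 2tx² = f² − t².
-/

open Finset

theorem Polynomial.card_nthRootsFinset_le {R : Type*} [CommRing R] [IsDomain R] (n : ℕ) (a : R) :
    #(nthRootsFinset n a) ≤ n := by
  classical
  rw [nthRootsFinset_def]
  exact (Multiset.toFinset_card_le _).trans (Polynomial.card_nthRoots n a)

variable {F : Type*} [Field F] [Fintype F] [DecidableEq F]

theorem isSquare_mul_of_not_isSquare {a b : F} (ha : ¬IsSquare a) (hb : ¬IsSquare b) :
    IsSquare (a * b) := by
  have hab : a * b ≠ 0 :=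
    mul_ne_zero (fun h => ha (h ▸ IsSquare.zero)) (fun h => hb (h ▸ IsSquare.zero))
  rw [← quadraticChar_one_iff_isSquare hab, map_mul,
    quadraticChar_neg_one_iff_not_isSquare.mpr ha, quadraticChar_neg_one_iff_not_isSquare.mpr hb]
  norm_num

def sqCurvePoints (g : F → F) : Finset (F × F) := {q | q.2 ^ 2 = g q.1}

theorem two_mul_card_le_card_sqCurvePoints (hF : ringChar F ≠ 2) {g : F → F}
    (hg : ∀ x, quadraticChar F (g x) = 1) : 2 * Fintype.card F ≤ #(sqCurvePoints g) := by
  rw [← card_univ]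
  refine mul_card_image_le_card_of_maps_to (f := Prod.fst) (fun _ _ => mem_univ _) 2 ?_
  intro x _
  have hgx : g x ≠ 0 := fun h => by simpa [h] using hg x
  obtain ⟨y, hy⟩ := (quadraticChar_one_iff_isSquare hgx).mp (hg x)
  have hy0 : y ≠ 0 := by rintro rfl; simp_all
  have hpair : ({(x, y), (x, -y)} : Finset (F × F)) ⊆ {q ∈ sqCurvePoints g | q.1 = x} := by
    intro q hq
    simp only [mem_insert, mem_singleton] at hq
    rcases hq with rfl | rfl <;> simp [sqCurvePoints, hy, sq]
  refine le_of_eq_of_le ?_ (card_le_card hpair)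
  rw [card_pair]
  simpa using fun h => hy0 ((Ring.eq_self_iff_eq_zero_of_char_ne_two hF).mp h.symm)

theorem card_sqCurvePoints_quartic_le (hF : ringChar F ≠ 2) {f : F} (hf : f ≠ 0) :
    #(sqCurvePoints fun x => x ^ 4 + f ^ 2) ≤ 2 * (Fintype.card F - 1) := by
  rw [← card_univ, ← card_erase_of_mem (mem_univ 0)]
  refine card_le_mul_card_image_of_maps_to (f := fun q => q.2 - q.1 ^ 2) ?_ 2 ?_
  · rintro ⟨x, y⟩ hq
    simp only [sqCurvePoints, mem_filter, mem_univ, true_and] at hq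
    refine mem_erase.mpr ⟨fun ht => hf ?_, mem_univ _⟩
    have hfactor : (y - x ^ 2) * (y + x ^ 2) = f ^ 2 := by linear_combination hq
    rw [ht, zero_mul] at hfactor
    exact pow_eq_zero_iff two_ne_zero |>.mp hfactor.symm
  · intro t ht
    have ht0 : t ≠ 0 := (mem_erase.mp ht).1
    calc #{q ∈ sqCurvePoints _ | q.2 - q.1 ^ 2 = t}
        ≤ #(Polynomial.nthRootsFinset 2 ((f ^ 2 - t ^ 2) / (2 * t))) := by
          refine card_le_card_of_injOn Prod.fst ?_ ?_
          · rintro ⟨x, y⟩ hq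
            simp only [sqCurvePoints, coe_filter, mem_filter, mem_univ, true_and,
              Set.mem_ofPred_eq] at hq
            rw [mem_coe, Polynomial.mem_nthRootsFinset two_pos,
              eq_div_iff (mul_ne_zero (Ring.two_ne_zero hF) ht0)]
            linear_combination hq.1 - (y + x ^ 2 + t) * hq.2
          · rintro ⟨x, y⟩ hq ⟨x', y'⟩ hq' (rfl : x = x')
            simp only [sqCurvePoints, coe_filter, mem_filter, mem_univ, true_and,
              Set.mem_ofPred_eq] at hq hq'
            rw [Prod.mk.injEq]
            exact ⟨rfl, by linear_combination hq.2 - hq'.2⟩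
      _ ≤ 2 := Polynomial.card_nthRootsFinset_le 2 _

theorem exists_quadraticChar_quartic_add_sq_ne_one (hF : ringChar F ≠ 2) {f : F} (hf : f ≠ 0) :
    ∃ x : F, quadraticChar F (x ^ 4 + f ^ 2) ≠ 1 := by
  by_contra! hall
  have hlower := two_mul_card_le_card_sqCurvePoints hF hall
  have hupper := card_sqCurvePoints_quartic_le hF hf
  have := Fintype.card_pos (α := F)
  omega

theorem exists_eq_mul_sq_of_not_isSquare {a c d : F} (ha : ¬IsSquare (d * a))
    (hc : ¬IsSquare (d * c)) : ∃ f ≠ 0, c = a * f ^ 2 := by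
  have hda : d * a ≠ 0 := fun h => ha (h ▸ IsSquare.zero)
  have hdc : d * c ≠ 0 := fun h => hc (h ▸ IsSquare.zero)
  obtain ⟨r, hr⟩ := isSquare_mul_of_not_isSquare ha hc
  have hr0 : r ≠ 0 := by rintro rfl; exact mul_ne_zero hda hdc (by simpa using hr)
  refine ⟨r / (d * a), div_ne_zero hr0 hda, ?_⟩
  rw [div_pow, mul_div_assoc', eq_div_iff (pow_ne_zero 2 hda)]
  linear_combination a * hr

theorem exists_isSquare_mul_quartic_form (a c d : F) :
    ∃ x y : F, (x ≠ 0 ∨ y ≠ 0) ∧ IsSquare (d * (a * x ^ 4 + c * y ^ 4)) := by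
  by_cases hda : IsSquare (d * a)
  · exact ⟨1, 0, by simp, by simpa using hda⟩
  by_cases hdc : IsSquare (d * c)
  · exact ⟨0, 1, by simp, by simpa using hdc⟩
  have hF : ringChar F ≠ 2 := fun h => hda (FiniteField.isSquare_of_char_two h _)
  obtain ⟨f, hf, rfl⟩ := exists_eq_mul_sq_of_not_isSquare hda hdc
  obtain ⟨x, hx⟩ := exists_quadraticChar_quartic_add_sq_ne_one hF hf
  refine ⟨x, 1, Or.inr one_ne_zero, ?_⟩
  have hfactor : d * (a * x ^ 4 + a * f ^ 2 * 1 ^ 4) = d * a * (x ^ 4 + f ^ 2) := by ring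
  rw [hfactor]
  by_cases hx0 : x ^ 4 + f ^ 2 = 0
  · simp [hx0]
  · exact isSquare_mul_of_not_isSquare hda ((quadraticChar_one_iff_isSquare hx0).not.mp hx)

theorem stmt6_general (p : ℕ) [Fact p.Prime] (a c d : ZMod p) (hd : d ≠ 0) :
    ∃ u v w z : ZMod p,
      a * u ^ 2 + c * w ^ 2 = d * z ^ 2 ∧ u * w = v ^ 2 ∧
      ¬(u = 0 ∧ v = 0 ∧ w = 0 ∧ z = 0) := by
  obtain ⟨x, y, hxy, s, hs⟩ := exists_isSquare_mul_quartic_form a c d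
  refine ⟨x ^ 2, x * y, y ^ 2, s / d, ?_, by ring, ?_⟩
  · rw [div_pow, mul_div_assoc', eq_div_iff (pow_ne_zero 2 hd)]
    linear_combination d * hs
  · rintro ⟨hu, -, hw, -⟩
    rcases hxy with hx | hy
    · exact hx (pow_eq_zero_iff two_ne_zero |>.mp hu)
    · exact hy (pow_eq_zero_iff two_ne_zero |>.mp hw)

theorem stmt6 (p : ℕ) [Fact p.Prime] (hp : Odd p) (a c d : ZMod p)
    (ha : a ≠ 0) (hc : c ≠ 0) (hd : d ≠ 0) :
    ∃ u v w z : ZMod p,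
      a * u ^ 2 + c * w ^ 2 = d * z ^ 2 ∧ u * w = v ^ 2 ∧
      ¬(u = 0 ∧ v = 0 ∧ w = 0 ∧ z = 0) :=
  stmt6_general p a c d hd
end

section
/- Let p be an odd prime and a, c, d nonzero integers. Suppose the system a·U² + c·W² = d·Z², U·W = V² has a strong solution modulo p, i.e., a primitive solution (u,v,w,z) modulo p such that at least one of a·u, c·w, d·z is nonzero modulo p. Then for every k ≥ 1 the system has a strong solution modulo p^k. -/
/-!
At a strong solution the differential of the system has rank two modulo the odd prime `p`, so
Hensel's lemma applies: a solution modulo `q` (with `p ∣ q`) is corrected by `q` times a solution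
of the linearised system modulo `p` into a solution modulo `q * p`, and the strong condition
survives because the correction vanishes modulo `p`. Primitivity is restored only at the end, by
dividing by the gcd, which is prime to `p`.
-/

/-- `(u,v,w,z)` is a strong solution modulo `n` (with distinguished prime `p`) of the system
`a·U² + c·W² = d·Z²`, `U·W = V²`: a primitive solution of the congruences mod `n` such that
at least one of `a·u, c·w, d·z` is not divisible by `p`. -/
def StrongSolution (a c d : ℤ) (p : ℕ) (n : ℤ) (u v w z : ℤ) : Prop :=
  Int.gcd u (Int.gcd v (Int.gcd w z)) = 1 ∧
  a * u ^ 2 + c * w ^ 2 ≡ d * z ^ 2 [ZMOD n] ∧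
  u * w ≡ v ^ 2 [ZMOD n] ∧
  (¬ (p : ℤ) ∣ a * u ∨ ¬ (p : ℤ) ∣ c * w ∨ ¬ (p : ℤ) ∣ d * z)

def ScaledStrongSolution (a c d : ℤ) (p : ℕ) (n : ℤ) (u v w z : ℤ) : Prop :=
  a * u ^ 2 + c * w ^ 2 ≡ d * z ^ 2 [ZMOD n] ∧
  u * w ≡ v ^ 2 [ZMOD n] ∧
  (¬ (p : ℤ) ∣ a * u ∨ ¬ (p : ℤ) ∣ c * w ∨ ¬ (p : ℤ) ∣ d * z)

/-- The differential of `(a U² + c W² - d Z², U W - V²)` at a strong solution is surjective. -/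
theorem exists_linearized_solution {K : Type*} [Field K] (h2 : (2 : K) ≠ 0) {a c d u v w z : K}
    (hsol : a * u ^ 2 + c * w ^ 2 = d * z ^ 2)
    (hstrong : a * u ≠ 0 ∨ c * w ≠ 0 ∨ d * z ≠ 0) (t s : K) :
    ∃ u' v' w' z' : K, 2 * (a * u * u' + c * w * w' - d * z * z') = t ∧
      w * u' + u * w' - 2 * v * v' = s := by
  by_cases hdz : d * z = 0
  · have hcw : c * w ^ 2 = -(a * u) * u := by linear_combination hsol + z * hdz
    have hau : a * u ≠ 0 := by
      intro hau
      have : (c * w) ^ 2 = 0 := by linear_combination c * (hcw - u * hau)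
      have := pow_eq_zero_iff two_ne_zero |>.1 this
      tauto
    -- half the determinant of the system in `u', w'`
    have hD : a * u ^ 2 - c * w ^ 2 ≠ 0 := by
      rw [show a * u ^ 2 - c * w ^ 2 = 2 * (a * u) * u by linear_combination -hcw]
      exact mul_ne_zero (mul_ne_zero h2 hau) (right_ne_zero_of_mul hau)
    refine ⟨(t * u - 2 * c * w * s) / (2 * (a * u ^ 2 - c * w ^ 2)),
      0, (2 * a * u * s - w * t) / (2 * (a * u ^ 2 - c * w ^ 2)), 0, ?_, ?_⟩
    · field_simp; ring
    · rw [mul_zero, sub_zero, mul_div_assoc', mul_div_assoc', ← add_div,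
        div_eq_iff (mul_ne_zero h2 hD)]
      ring
  · obtain ⟨hd, hz⟩ : d ≠ 0 ∧ z ≠ 0 := mul_ne_zero_iff.1 hdz
    obtain ⟨u', w', huw⟩ : ∃ u' w', w * u' + u * w' = s := by
      by_cases hw : w = 0
      · have hu : u ≠ 0 := by
          rintro rfl
          have : d * z * z = 0 := by rw [hw] at hsol; linear_combination -hsol
          exact hdz ((mul_eq_zero.1 this).resolve_right hz)
        exact ⟨0, s / u, by field_simp; ring⟩
      · exact ⟨s / w, 0, by field_simp; ring⟩
    refine ⟨u', 0, w', (2 * (a * u * u' + c * w * w') - t) / (2 * (d * z)), ?_,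
      by rw [← huw]; ring⟩
    field_simp
    ring

/-- Hensel's step: since `p ∣ q`, the terms of the correction quadratic in `q` vanish
modulo `q * p`. -/
theorem scaledStrongSolution_add_mul {a c d : ℤ} {p : ℕ} {q t s u v w z : ℤ}
    (u' v' w' z' : ℤ) (hpq : (p : ℤ) ∣ q)
    (ht : a * u ^ 2 + c * w ^ 2 - d * z ^ 2 = q * t) (hs : u * w - v ^ 2 = q * s)
    (hF : (p : ℤ) ∣ t + 2 * (a * u * u' + c * w * w' - d * z * z'))
    (hG : (p : ℤ) ∣ s + (w * u' + u * w' - 2 * v * v'))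
    (hstrong : ¬ (p : ℤ) ∣ a * u ∨ ¬ (p : ℤ) ∣ c * w ∨ ¬ (p : ℤ) ∣ d * z) :
    ScaledStrongSolution a c d p (q * p) (u + q * u') (v + q * v') (w + q * w') (z + q * z') := by
  obtain ⟨r, rfl⟩ := hpq
  obtain ⟨m, hm⟩ := hF
  obtain ⟨n, hn⟩ := hG
  have keep : ∀ x y e : ℤ, ¬ (p : ℤ) ∣ x * y → ¬ (p : ℤ) ∣ x * (y + p * r * e) := by
    intro x y e hxy hdvd
    rw [mul_add, mul_left_comm, mul_assoc] at hdvd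
    exact hxy ((dvd_add_left (dvd_mul_right _ _)).1 hdvd)
  refine ⟨Int.modEq_iff_dvd.2 ⟨-(m + r * (a * u' ^ 2 + c * w' ^ 2 - d * z' ^ 2)), ?_⟩,
    Int.modEq_iff_dvd.2 ⟨-(n + r * (u' * w' - v' ^ 2)), ?_⟩,
    hstrong.imp (keep _ _ _) (Or.imp (keep _ _ _) (keep _ _ _))⟩
  · linear_combination -ht - p * r * hm
  · linear_combination -hs - p * r * hn

theorem ScaledStrongSolution.lift {a c d : ℤ} {p : ℕ} (hp : p.Prime) (hodd : Odd p) {q : ℤ}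
    (hpq : (p : ℤ) ∣ q) {u v w z : ℤ} (h : ScaledStrongSolution a c d p q u v w z) :
    ∃ u v w z : ℤ, ScaledStrongSolution a c d p (q * p) u v w z := by
  have := Fact.mk hp
  obtain ⟨h1, h2, hstrong⟩ := h
  obtain ⟨t, ht⟩ := Int.modEq_iff_dvd.1 h1.symm
  obtain ⟨s, hs⟩ := Int.modEq_iff_dvd.1 h2.symm
  have h2p : (2 : ZMod p) ≠ 0 := by
    refine Ring.two_ne_zero ?_
    rw [ZMod.ringChar_zmod_n]
    rintro rfl
    exact Nat.not_odd_iff_even.2 even_two hodd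
  have hsolp : (a : ZMod p) * u ^ 2 + c * w ^ 2 = d * z ^ 2 := by
    exact_mod_cast (ZMod.intCast_eq_intCast_iff _ _ p).2 (h1.of_dvd hpq)
  have hstrongp : ((a * u : ℤ) : ZMod p) ≠ 0 ∨ ((c * w : ℤ) : ZMod p) ≠ 0 ∨
      ((d * z : ℤ) : ZMod p) ≠ 0 := by
    simpa only [Ne, ZMod.intCast_zmod_eq_zero_iff_dvd] using hstrong
  push_cast at hstrongp
  obtain ⟨u', v', w', z', hF, hG⟩ :=
    exists_linearized_solution (v := v) h2p hsolp hstrongp (-t) (-s)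
  obtain ⟨u', rfl⟩ := ZMod.intCast_surjective u'
  obtain ⟨v', rfl⟩ := ZMod.intCast_surjective v'
  obtain ⟨w', rfl⟩ := ZMod.intCast_surjective w'
  obtain ⟨z', rfl⟩ := ZMod.intCast_surjective z'
  refine ⟨_, _, _, _, scaledStrongSolution_add_mul u' v' w' z' hpq ht hs ?_ ?_ hstrong⟩
  · rw [← ZMod.intCast_zmod_eq_zero_iff_dvd]; push_cast; linear_combination hF
  · rw [← ZMod.intCast_zmod_eq_zero_iff_dvd]; push_cast; linear_combination hG

def gcd₄ (u v w z : ℤ) : ℕ := Int.gcd u (Int.gcd v (Int.gcd w z))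

theorem gcd₄_dvd (u v w z : ℤ) :
    (gcd₄ u v w z : ℤ) ∣ u ∧ (gcd₄ u v w z : ℤ) ∣ v ∧ (gcd₄ u v w z : ℤ) ∣ w ∧
      (gcd₄ u v w z : ℤ) ∣ z :=
  ⟨Int.gcd_dvd_left _ _, (Int.gcd_dvd_right _ _).trans (Int.gcd_dvd_left _ _),
    ((Int.gcd_dvd_right _ _).trans (Int.gcd_dvd_right _ _)).trans (Int.gcd_dvd_left _ _),
    ((Int.gcd_dvd_right _ _).trans (Int.gcd_dvd_right _ _)).trans (Int.gcd_dvd_right _ _)⟩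

theorem dvd_gcd₄ {g u v w z : ℤ} (hu : g ∣ u) (hv : g ∣ v) (hw : g ∣ w) (hz : g ∣ z) :
    g ∣ gcd₄ u v w z :=
  Int.dvd_coe_gcd hu (Int.dvd_coe_gcd hv (Int.dvd_coe_gcd hw hz))

/-- A strong solution modulo `p ^ k` becomes primitive after division by `gcd₄`, which is prime
to `p` and hence a unit modulo `p ^ k`. -/
theorem ScaledStrongSolution.exists_strongSolution {a c d : ℤ} {p : ℕ} (hp : p.Prime)
    {k : ℕ} {u v w z : ℤ} (h : ScaledStrongSolution a c d p ((p : ℤ) ^ k) u v w z) :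
    ∃ u v w z : ℤ, StrongSolution a c d p ((p : ℤ) ^ k) u v w z := by
  obtain ⟨h1, h2, hstrong⟩ := h
  obtain ⟨g, hg⟩ : ∃ g : ℤ, (gcd₄ u v w z : ℤ) = g := ⟨_, rfl⟩
  obtain ⟨⟨u', rfl⟩, ⟨v', rfl⟩, ⟨w', rfl⟩, ⟨z', rfl⟩⟩ := hg ▸ gcd₄_dvd u v w z
  have hpg : ¬ (p : ℤ) ∣ g := by
    intro hpg
    rcases hstrong with h | h | h <;>
      exact h (dvd_mul_of_dvd_right (dvd_mul_of_dvd_left hpg _) _)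
  have hg0 : g ≠ 0 := by rintro rfl; exact hpg (dvd_zero _)
  have hcop : IsCoprime ((p : ℤ) ^ k) (g ^ 2) :=
    ((Nat.prime_iff_prime_int.1 hp).coprime_iff_not_dvd.2 hpg).pow
  refine ⟨u', v', w', z', ?_, ?_, ?_, ?_⟩
  · obtain ⟨hGu, hGv, hGw, hGz⟩ := gcd₄_dvd u' v' w' z'
    have hgG : g * gcd₄ u' v' w' z' ∣ g * 1 := by
      simpa only [hg, mul_one] using dvd_gcd₄ (mul_dvd_mul_left g hGu)
        (mul_dvd_mul_left g hGv) (mul_dvd_mul_left g hGw) (mul_dvd_mul_left g hGz)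
    exact_mod_cast
      Int.eq_one_of_dvd_one (Int.natCast_nonneg _) ((mul_dvd_mul_iff_left hg0).1 hgG)
  · refine Int.modEq_iff_dvd.2 (hcop.dvd_of_dvd_mul_left ?_)
    have := Int.modEq_iff_dvd.1 h1
    rwa [show d * (g * z') ^ 2 - (a * (g * u') ^ 2 + c * (g * w') ^ 2) =
      g ^ 2 * (d * z' ^ 2 - (a * u' ^ 2 + c * w' ^ 2)) by ring] at this
  · refine Int.modEq_iff_dvd.2 (hcop.dvd_of_dvd_mul_left ?_)
    have := Int.modEq_iff_dvd.1 h2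
    rwa [show (g * v') ^ 2 - g * u' * (g * w') = g ^ 2 * (v' ^ 2 - u' * w') by ring] at this
  · rw [mul_left_comm a, mul_left_comm c, mul_left_comm d] at hstrong
    exact hstrong.imp (mt (dvd_mul_of_dvd_right · g))
      (Or.imp (mt (dvd_mul_of_dvd_right · g)) (mt (dvd_mul_of_dvd_right · g)))

theorem stmt9_general (p : ℕ) (hp : p.Prime) (hodd : Odd p) (a c d : ℤ)
    (h : ∃ u v w z : ℤ, StrongSolution a c d p (p : ℤ) u v w z) :
    ∀ k : ℕ, 1 ≤ k → ∃ u v w z : ℤ, StrongSolution a c d p ((p : ℤ) ^ k) u v w z := by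
  intro k hk
  suffices ∃ u v w z : ℤ, ScaledStrongSolution a c d p ((p : ℤ) ^ k) u v w z by
    obtain ⟨u, v, w, z, hs⟩ := this
    exact hs.exists_strongSolution hp
  induction k, hk using Nat.le_induction with
  | base =>
    obtain ⟨u, v, w, z, -, hs⟩ := h
    exact ⟨u, v, w, z, by rwa [pow_one]⟩
  | succ k hk ih =>
    obtain ⟨u, v, w, z, hs⟩ := ih
    rw [pow_succ]
    exact hs.lift hp hodd (dvd_pow_self _ (by omega))

theorem stmt9 (p : ℕ) (hp : p.Prime) (hodd : Odd p) (a c d : ℤ)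
    (ha : a ≠ 0) (hc : c ≠ 0) (hd : d ≠ 0)
    (h : ∃ u v w z : ℤ, StrongSolution a c d p (p : ℤ) u v w z) :
    ∀ k : ℕ, 1 ≤ k → ∃ u v w z : ℤ, StrongSolution a c d p ((p : ℤ) ^ k) u v w z :=
  stmt9_general p hp hodd a c d h
end

section
/- Let p be an odd prime not dividing a·c·d, where a, c, d are nonzero integers. Then for every k ≥ 1 the system a·U² + c·W² = d·Z², U·W = V² has a primitive solution modulo p^k. -/
/-!
Parametrising `u w = v²` by `(u, v, w) = (v², v, 1)` reduces the problem to a point on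
`a v⁴ + c = d z²` (or, exchanging the roles of `(a, u)` and `(c, w)`, on `c v⁴ + a = d z²`),
and a solution with `w = 1` is automatically primitive. Over `𝔽_p` such a point exists: take
`v = 0` if `a d` or `c d` is a square; otherwise `a c` is a square. For `p ≡ 3 (mod 4)` a
solution of `a α² + c = d β²` (pigeonhole) has `±α = ξ²`. For `p ≡ 1 (mod 4)` write `c = a e²`
and use a `t` with `t` and `t² - 1` both non-squares, which exists because
`∑ χ (t² - 1) = -1`. Since `p` is odd, the point is a simple root in `z` when `z ≠ 0`, and in
`v` otherwise, so Hensel's lemma lifts it modulo `p ^ k`.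
-/

open Polynomial

section Field

variable {K : Type*} [Field K]

theorem exists_mul_sq_eq_of_isSquare_mul {d x : K} (hd : d ≠ 0) (h : IsSquare (d * x)) :
    ∃ z, d * z ^ 2 = x := by
  obtain ⟨r, hr⟩ := h
  exact ⟨r / d, by field_simp; linear_combination -hr⟩

theorem IsSquare.of_mul_sq {x y : K} (hy : y ≠ 0) (h : IsSquare (x * y ^ 2)) : IsSquare x := by
  simpa [hy] using h.div (IsSquare.sq y)

end Field

namespace FiniteField

variable {F : Type*} [Field F] [Fintype F]

theorem isSquare_iff_quadraticChar_ne_neg_one [DecidableEq F] {x : F} :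
    IsSquare x ↔ quadraticChar F x ≠ -1 := by
  rw [ne_eq, quadraticChar_neg_one_iff_not_isSquare, not_not]

theorem isSquare_mul_of_not_isSquare {x y : F} (hx : ¬IsSquare x) (hy : ¬IsSquare y) :
    IsSquare (x * y) := by
  classical
  rw [← quadraticChar_neg_one_iff_not_isSquare] at hx hy
  rw [isSquare_iff_quadraticChar_ne_neg_one, map_mul, hx, hy]
  norm_num

theorem isSquare_or_isSquare_neg (hm1 : ¬IsSquare (-1 : F)) (x : F) :
    IsSquare x ∨ IsSquare (-x) := by
  classical
  rw [← quadraticChar_neg_one_iff_not_isSquare] at hm1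
  rw [isSquare_iff_quadraticChar_ne_neg_one, isSquare_iff_quadraticChar_ne_neg_one,
    neg_eq_neg_one_mul x, map_mul, hm1]
  omega

theorem sum_quadraticChar_sq_sub_one [DecidableEq F] (hF : ringChar F ≠ 2) :
    ∑ t : F, quadraticChar F (t ^ 2 - 1) = -1 := by
  have h2 : (2 : F) ≠ 0 := Ring.two_ne_zero hF
  -- `t ^ 2 - 1 = (1 - 2 / (t + 1)) * (t + 1) ^ 2`, and `t ↦ 1 - 2 / (t + 1)` is a bijection
  -- of `F`; as `0⁻¹ = 0` it sends `-1` to `1`, whence the correction term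
  have hpt : ∀ t : F, quadraticChar F (1 - 2 * (t + 1)⁻¹) - quadraticChar F (t ^ 2 - 1) =
      if t = -1 then 1 else 0 := by
    intro t
    split_ifs with ht
    · simp [ht]
    · have ht1 : t + 1 ≠ 0 := fun h => ht (eq_neg_of_add_eq_zero_left h)
      rw [show t ^ 2 - 1 = (1 - 2 * (t + 1)⁻¹) * (t + 1) ^ 2 by field_simp; ring, map_mul,
        quadraticChar_sq_one' ht1, mul_one, sub_self]
  have hbij : ∑ t : F, quadraticChar F (1 - 2 * (t + 1)⁻¹) = 0 := by
    rw [← quadraticChar_sum_zero hF]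
    exact Fintype.sum_equiv ((Equiv.addRight 1).trans ((Equiv.inv F).trans
      ((Equiv.mulLeft₀ 2 h2).trans (Equiv.subLeft 1)))) _ _ (fun _ => rfl)
  have := Finset.sum_congr rfl (fun t (_ : t ∈ Finset.univ) => hpt t)
  rw [Finset.sum_sub_distrib, hbij, Finset.sum_ite_eq', if_pos (Finset.mem_univ _)] at this
  linarith

theorem exists_not_isSquare_and_not_isSquare_sq_sub_one (hF : ringChar F ≠ 2)
    (hm1 : IsSquare (-1 : F)) : ∃ t : F, ¬IsSquare t ∧ ¬IsSquare (t ^ 2 - 1) := by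
  classical
  by_contra! h
  -- otherwise `χ t + χ (t ^ 2 - 1) ≥ 0` for every `t`, while these values sum to `0 + (-1)`
  have hnonneg : ∀ t : F, 0 ≤ quadraticChar F t + quadraticChar F (t ^ 2 - 1) := by
    intro t
    by_cases ht0 : t = 0
    · simp [ht0, (quadraticChar_one_iff_isSquare (neg_ne_zero.mpr one_ne_zero)).mpr hm1]
    rcases quadraticChar_dichotomy ht0 with ht | ht
    · rcases quadraticChar_isQuadratic F (t ^ 2 - 1) with h' | h' | h' <;> rw [ht, h'] <;> norm_num
    · have ht' := quadraticChar_neg_one_iff_not_isSquare.mp ht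
      have hne : t ^ 2 - 1 ≠ 0 := by
        rw [sub_ne_zero, Ne, sq_eq_one_iff]
        rintro (rfl | rfl)
        exacts [ht' IsSquare.one, ht' hm1]
      rw [ht, (quadraticChar_one_iff_isSquare hne).mpr (h t ht')]
      norm_num
  have hsum := Finset.sum_nonneg (fun t (_ : t ∈ Finset.univ) => hnonneg t)
  rw [Finset.sum_add_distrib, quadraticChar_sum_zero hF, sum_quadraticChar_sq_sub_one hF] at hsum
  norm_num at hsum

variable {a c d : F}

theorem exists_quartic_point_of_not_isSquare_neg_one (hF : ringChar F ≠ 2) (ha : a ≠ 0)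
    (hd : d ≠ 0) (hm1 : ¬IsSquare (-1 : F)) : ∃ v z : F, a * v ^ 4 + c = d * z ^ 2 := by
  obtain ⟨α, β, h⟩ := exists_root_sum_quadratic (degree_quadratic (b := 0) (c := c) ha)
    (degree_quadratic (b := 0) (c := 0) (neg_ne_zero.mpr hd)) (odd_card_of_char_ne_two hF)
  simp only [eval_add, eval_mul, eval_C, eval_pow, eval_X, zero_mul, add_zero] at h
  -- as `-1` is not a square, `α` or `-α` is a square, and either way `α ^ 2` is a fourth power
  obtain ⟨v, hv⟩ : ∃ v : F, v ^ 4 = α ^ 2 := by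
    rcases isSquare_or_isSquare_neg hm1 α with ⟨v, hv⟩ | ⟨v, hv⟩
    · exact ⟨v, by rw [hv]; ring⟩
    · exact ⟨v, by linear_combination (α - v * v) * hv⟩
  exact ⟨v, β, by rw [hv]; linear_combination h⟩

theorem exists_quartic_point_of_isSquare_neg_one (hF : ringChar F ≠ 2) (ha : a ≠ 0)
    (hd : d ≠ 0) (hm1 : IsSquare (-1 : F)) (hac : IsSquare (a * c)) (hcd : ¬IsSquare (c * d)) :
    ∃ v z : F, a * v ^ 4 + c = d * z ^ 2 := by
  obtain ⟨i, hi⟩ := id hm1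
  -- with `c = a e²`, the form `a v ^ 4 + c` factors as `a (v ^ 2 + i e) (v ^ 2 - i e)`
  obtain ⟨e, hce⟩ : ∃ e, c = a * e ^ 2 := by
    obtain ⟨s, hs⟩ := hac
    exact ⟨s / a, by field_simp; linear_combination hs⟩
  by_cases hie : IsSquare (i * e)
  · obtain ⟨r, hr⟩ := hie
    refine ⟨r, 0, ?_⟩
    rw [hce]
    linear_combination (a * (r * r + i * e)) * hr.symm - a * e ^ 2 * hi
  -- otherwise `v ^ 2 = i e (t + 1) / (t - 1)` makes `a v ^ 4 + c = -4 c t / (t - 1) ^ 2`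
  obtain ⟨t, ht, ht2⟩ := exists_not_isSquare_and_not_isSquare_sq_sub_one hF ⟨i, hi⟩
  have ht1 : t - 1 ≠ 0 := sub_ne_zero.mpr (by rintro rfl; exact ht IsSquare.one)
  obtain ⟨v, hv⟩ : IsSquare (i * e * (t + 1) / (t - 1)) := by
    have := (isSquare_mul_of_not_isSquare hie ht2).div (IsSquare.sq (t - 1))
    rwa [show i * e * (t ^ 2 - 1) / (t - 1) ^ 2 = i * e * (t + 1) / (t - 1) by
      field_simp; ring] at this
  obtain ⟨z, hz⟩ := exists_mul_sq_eq_of_isSquare_mul hd (x := -4 * c * t / (t - 1) ^ 2) (by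
    rw [show d * (-4 * c * t / (t - 1) ^ 2) = -1 * (c * d * t) * (2 / (t - 1)) ^ 2 by
      rw [div_pow]; ring]
    exact (hm1.mul (isSquare_mul_of_not_isSquare hcd ht)).mul (IsSquare.sq _))
  refine ⟨v, z, ?_⟩
  rw [hz, hce, show v ^ 4 = (v * v) ^ 2 by ring, ← hv]
  field_simp
  linear_combination -e ^ 2 * (t + 1) ^ 2 * hi

theorem exists_quartic_point (hF : ringChar F ≠ 2) (ha : a ≠ 0) (hd : d ≠ 0) :
    (∃ v z : F, a * v ^ 4 + c = d * z ^ 2) ∨ ∃ v z : F, c * v ^ 4 + a = d * z ^ 2 := by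
  by_cases had : IsSquare (a * d)
  · obtain ⟨z, hz⟩ := exists_mul_sq_eq_of_isSquare_mul hd (by rwa [mul_comm] at had)
    exact Or.inr ⟨0, z, by simp [hz]⟩
  by_cases hcd : IsSquare (c * d)
  · obtain ⟨z, hz⟩ := exists_mul_sq_eq_of_isSquare_mul hd (by rwa [mul_comm] at hcd)
    exact Or.inl ⟨0, z, by simp [hz]⟩
  left
  by_cases hm1 : IsSquare (-1 : F)
  · have hac : IsSquare (a * c) := IsSquare.of_mul_sq hd <| by
      simpa only [mul_mul_mul_comm, ← pow_two] using isSquare_mul_of_not_isSquare had hcd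
    exact exists_quartic_point_of_isSquare_neg_one hF ha hd hm1 hac hcd
  · exact exists_quartic_point_of_not_isSquare_neg_one hF ha hd hm1

end FiniteField

namespace Int

theorem exists_hensel_step (f : ℤ[X]) {p x : ℤ} (hp : Prime p) {n : ℕ}
    (hx : p ^ (n + 1) ∣ f.eval x) (hsimple : ¬p ∣ f.derivative.eval x) :
    ∃ y, p ∣ y - x ∧ p ^ (n + 2) ∣ f.eval y := by
  obtain ⟨q, hq⟩ := hx
  obtain ⟨r, s, hrs⟩ := hp.coprime_iff_not_dvd.mpr hsimple
  obtain ⟨K, hK⟩ := f.binomExpansion x (-(p ^ (n + 1) * q * s))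
  refine ⟨x - p ^ (n + 1) * q * s, ⟨-(p ^ n * q * s), by ring⟩,
    q * r + K * p ^ n * q ^ 2 * s ^ 2, ?_⟩
  rw [sub_eq_add_neg, hK, hq]
  linear_combination -(p ^ (n + 1) * q) * hrs

theorem exists_hensel_lift (f : ℤ[X]) {p x₀ : ℤ} (hp : Prime p) (hroot : p ∣ f.eval x₀)
    (hsimple : ¬p ∣ f.derivative.eval x₀) (n : ℕ) :
    ∃ x, p ∣ x - x₀ ∧ p ^ (n + 1) ∣ f.eval x := by
  induction n with
  | zero => exact ⟨x₀, by simp, by simpa using hroot⟩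
  | succ n ih =>
    obtain ⟨x, hxx₀, hx⟩ := ih
    have hsimple' : ¬p ∣ f.derivative.eval x := fun h => hsimple <| by
      simpa using dvd_sub h (hxx₀.trans (sub_dvd_eval_sub x x₀ f.derivative))
    obtain ⟨y, hyx, hy⟩ := exists_hensel_step f hp hx hsimple'
    exact ⟨y, by simpa using dvd_add hyx hxx₀, hy⟩

end Int

def HasPrimitiveSolutionMod (a c d m : ℤ) : Prop :=
  ∃ u v w z : ℤ, Int.gcd u (Int.gcd v (Int.gcd w z)) = 1 ∧
    a * u ^ 2 + c * w ^ 2 ≡ d * z ^ 2 [ZMOD m] ∧ u * w ≡ v ^ 2 [ZMOD m]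

namespace HasPrimitiveSolutionMod

variable {a c d m : ℤ}

theorem swap (h : HasPrimitiveSolutionMod a c d m) : HasPrimitiveSolutionMod c a d m := by
  obtain ⟨u, v, w, z, hgcd, h₁, h₂⟩ := h
  refine ⟨w, v, u, z, ?_, by rwa [add_comm], by rwa [mul_comm]⟩
  rwa [Int.gcd_left_comm w, Int.gcd_left_comm w, Int.gcd_left_comm v]

theorem of_modEq {v z : ℤ} (h : a * v ^ 4 + c ≡ d * z ^ 2 [ZMOD m]) :
    HasPrimitiveSolutionMod a c d m :=
  ⟨v ^ 2, v, 1, z, by simp, by rwa [← pow_mul, one_pow, mul_one], by rw [mul_one]⟩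

theorem of_zmod {p : ℕ} [Fact p.Prime] (hp2 : p ≠ 2) (ha : (a : ZMod p) ≠ 0)
    (hc : (c : ZMod p) ≠ 0) (hd : (d : ZMod p) ≠ 0) {v₀ z₀ : ZMod p}
    (h : a * v₀ ^ 4 + c = d * z₀ ^ 2) (k : ℕ) : HasPrimitiveSolutionMod a c d (p ^ k) := by
  have h2 : (2 : ZMod p) ≠ 0 := Ring.two_ne_zero (by rwa [ZMod.ringChar_zmod_n])
  have h4 : (4 : ZMod p) ≠ 0 := by
    rw [show (4 : ZMod p) = 2 * 2 by norm_num]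
    exact mul_ne_zero h2 h2
  have hp : Prime (p : ℤ) := Nat.prime_iff_prime_int.mp Fact.out
  have hdvd (n : ℤ) : (p : ℤ) ∣ n ↔ (n : ZMod p) = 0 :=
    (ZMod.intCast_zmod_eq_zero_iff_dvd n p).symm
  have hpow : (p : ℤ) ^ k ∣ (p : ℤ) ^ (k + 1) := pow_dvd_pow _ k.le_succ
  obtain ⟨v, rfl⟩ := ZMod.intCast_surjective v₀
  obtain ⟨z, rfl⟩ := ZMod.intCast_surjective z₀
  by_cases hz : (z : ZMod p) = 0
  · have hv : (v : ZMod p) ≠ 0 := by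
      rintro hv
      simp only [hv, hz, ne_eq, OfNat.ofNat_ne_zero, not_false_eq_true, zero_pow, mul_zero,
        zero_add] at h
      exact hc h
    obtain ⟨x, -, hx⟩ := Int.exists_hensel_lift (C a * X ^ 4 + C c) hp (x₀ := v)
      (by simp [hdvd, h, hz]) (by simpa [hdvd] using ⟨ha, h4, hv⟩) k
    exact of_modEq (z := 0) (by simpa using Int.modEq_zero_iff_dvd.mpr (hpow.trans hx))
  · obtain ⟨x, -, hx⟩ :=
      Int.exists_hensel_lift (C d * X ^ 2 - C (a * v ^ 4 + c)) hp (x₀ := z)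
      (by simp [hdvd, h])
      (by rw [derivative_sub, derivative_C, sub_zero]; simpa [hdvd] using ⟨hd, h2, hz⟩) k
    exact of_modEq (Int.modEq_iff_dvd.mpr (by simpa using hpow.trans hx))

end HasPrimitiveSolutionMod

theorem stmt10_general (p : ℕ) (hp : p.Prime) (hodd : Odd p) (a c d : ℤ)
    (hpacd : ¬ (p : ℤ) ∣ a * c * d) :
    ∀ k : ℕ, 1 ≤ k → ∃ u v w z : ℤ,
      Int.gcd u (Int.gcd v (Int.gcd w z)) = 1 ∧
      a * u ^ 2 + c * w ^ 2 ≡ d * z ^ 2 [ZMOD ((p : ℤ) ^ k)] ∧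
      u * w ≡ v ^ 2 [ZMOD ((p : ℤ) ^ k)] := by
  intro k _
  have : Fact p.Prime := ⟨hp⟩
  have hp2 : p ≠ 2 := by rintro rfl; exact absurd hodd (by decide)
  have hacd : (a : ZMod p) * c * d ≠ 0 := by
    exact_mod_cast mt (ZMod.intCast_zmod_eq_zero_iff_dvd _ p).mp hpacd
  simp only [mul_ne_zero_iff] at hacd
  obtain ⟨⟨ha, hc⟩, hd⟩ := hacd
  rcases FiniteField.exists_quartic_point (by rwa [ZMod.ringChar_zmod_n]) ha hd with
    ⟨v, z, h⟩ | ⟨v, z, h⟩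
  · exact HasPrimitiveSolutionMod.of_zmod hp2 ha hc hd h k
  · exact (HasPrimitiveSolutionMod.of_zmod hp2 hc ha hd h k).swap

theorem stmt10 (p : ℕ) (hp : p.Prime) (hodd : Odd p) (a c d : ℤ)
    (ha : a ≠ 0) (hc : c ≠ 0) (hd : d ≠ 0) (hpacd : ¬ (p : ℤ) ∣ a * c * d) :
    ∀ k : ℕ, 1 ≤ k → ∃ u v w z : ℤ,
      Int.gcd u (Int.gcd v (Int.gcd w z)) = 1 ∧
      a * u ^ 2 + c * w ^ 2 ≡ d * z ^ 2 [ZMOD ((p : ℤ) ^ k)] ∧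
      u * w ≡ v ^ 2 [ZMOD ((p : ℤ) ^ k)] :=
  stmt10_general p hp hodd a c d hpacd
end

section
/- Let a, c, d be nonzero integers. If the system a·U² + c·W² = d·Z², U·W = V² has a strong solution modulo 2⁴ = 16, then it has a strong solution modulo 2^k for all k ≥ 1. -/
-- `StrongSolution` unfolds to primitivity `∧ NondegenerateSolution`.
def NondegenerateSolution (a c d : ℤ) (p : ℕ) (n : ℤ) (u v w z : ℤ) : Prop :=
  a * u ^ 2 + c * w ^ 2 ≡ d * z ^ 2 [ZMOD n] ∧
  u * w ≡ v ^ 2 [ZMOD n] ∧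
  (¬ (p : ℤ) ∣ a * u ∨ ¬ (p : ℤ) ∣ c * w ∨ ¬ (p : ℤ) ∣ d * z)

theorem exists_gcd_gcd_gcd_eq_one (u v w z : ℤ) :
    ∃ u₀ v₀ w₀ z₀ : ℤ, u₀.gcd (v₀.gcd (w₀.gcd z₀)) = 1 ∧
      u = u.gcd (v.gcd (w.gcd z)) * u₀ ∧ v = u.gcd (v.gcd (w.gcd z)) * v₀ ∧
      w = u.gcd (v.gcd (w.gcd z)) * w₀ ∧ z = u.gcd (v.gcd (w.gcd z)) * z₀ := by
  obtain ⟨g, hg⟩ : ∃ g, u.gcd (v.gcd (w.gcd z)) = g := ⟨_, rfl⟩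
  rcases eq_or_ne g 0 with rfl | hg₀
  · simp only [Int.gcd_eq_zero_iff, Nat.cast_eq_zero] at hg
    obtain ⟨rfl, rfl, rfl, rfl⟩ := hg
    exact ⟨1, 0, 0, 0, by simp⟩
  have hvwz : (g : ℤ) ∣ v.gcd (w.gcd z) := hg ▸ Int.gcd_dvd_right ..
  have hwz : (g : ℤ) ∣ w.gcd z := hvwz.trans (Int.gcd_dvd_right ..)
  obtain ⟨u₀, rfl⟩ : (g : ℤ) ∣ u := hg ▸ Int.gcd_dvd_left ..
  obtain ⟨v₀, rfl⟩ : (g : ℤ) ∣ v := hvwz.trans (Int.gcd_dvd_left ..)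
  obtain ⟨w₀, rfl⟩ : (g : ℤ) ∣ w := hwz.trans (Int.gcd_dvd_left ..)
  obtain ⟨z₀, rfl⟩ : (g : ℤ) ∣ z := hwz.trans (Int.gcd_dvd_right ..)
  simp only [Int.gcd_mul_left, Int.natAbs_natCast, Nat.cast_mul] at hg
  have hprim := (mul_eq_left₀ hg₀).mp hg
  refine ⟨u₀, v₀, w₀, z₀, hprim, ?_⟩
  simp [Int.gcd_mul_left, hprim]

theorem exists_four_dvd_add_mul_add_sq (r v P : ℤ) (hv : Odd v) :
    ∃ δ : ℤ, 4 ∣ r + δ * v + 2 * P * δ ^ 2 := by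
  obtain ⟨k, rfl⟩ := hv
  -- `δ = 0, 2` give the even residues and `δ = 1, 3` the odd ones, which differ by `2v`.
  have : 4 ∣ r ∨ 4 ∣ r + (2 * k + 1) + 2 * P ∨ 4 ∣ r + 2 * (2 * k + 1) + 8 * P ∨
      4 ∣ r + 3 * (2 * k + 1) + 18 * P := by
    rcases Int.emod_two_eq P with hP | hP <;> rcases Int.emod_two_eq k with hk | hk <;> omega
  rcases this with h | h | h | h
  · exact ⟨0, by simpa using h⟩
  · exact ⟨1, by convert h using 1; ring⟩
  · exact ⟨2, by convert h using 1; ring⟩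
  · exact ⟨3, by convert h using 1; ring⟩

theorem exists_lift_of_odd_mul {a c d P u v w z : ℤ} (hau : Odd (a * u))
    (h₁ : a * u ^ 2 + c * w ^ 2 ≡ d * z ^ 2 [ZMOD 16 * P])
    (h₂ : u * w ≡ v ^ 2 [ZMOD 16 * P]) :
    ∃ u' v' w', a * u' ^ 2 + c * w' ^ 2 ≡ d * z ^ 2 [ZMOD 32 * P] ∧
      u' * w' ≡ v' ^ 2 [ZMOD 32 * P] ∧ Odd (a * u') := by
  obtain ⟨t, ht⟩ := h₁.dvd
  obtain ⟨m, hm⟩ := h₂.dvd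
  obtain ⟨β, hβ⟩ := (Int.odd_mul.mp hau).2
  obtain ⟨s, hs⟩ := hau
  -- `u' = u + 8Pt` removes the error `16Pt` of the first equation, because `1 - au` is even.
  set u' := u + 8 * P * t
  have hau' : Odd (a * u') := ⟨s + 4 * a * P * t, by linear_combination hs⟩
  have h₁' : d * z ^ 2 - (a * u' ^ 2 + c * w ^ 2) = 32 * P * (-(t * s) - 2 * P * t ^ 2 * a) := by
    linear_combination ht - 16 * P * t * hs
  obtain ⟨w₁, hw | hw⟩ := Int.even_or_odd' w
  · -- `w` even: the error `16P(m - tw₁)` of the second equation is removed by moving `w`.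
    set r := m - t * w₁
    refine ⟨u', v, w + 16 * P * r,
      Int.modEq_iff_dvd.mpr ⟨-(t * s) - 2 * P * t ^ 2 * a - r * c * w - 8 * P * r ^ 2 * c, ?_⟩,
      Int.modEq_iff_dvd.mpr ⟨-(r * β) - 4 * P * r * t, ?_⟩, hau'⟩
    · linear_combination h₁'
    · linear_combination hm - 8 * P * t * hw - 16 * P * r * hβ
  · -- `w` odd forces `v` odd, and then `v ↦ v + 4Pδ` moves the error by `8P(δv + 2Pδ²)`.
    have hv : Odd v := by
      have : Odd (v ^ 2) := ⟨8 * P * m + w₁ * (2 * β + 1) + β,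
        by linear_combination hm + w * hβ + (2 * β + 1) * hw⟩
      exact (Int.odd_pow.mp this).resolve_right two_ne_zero
    obtain ⟨δ, q, hq⟩ := exists_four_dvd_add_mul_add_sq (2 * m - t * w) v P hv
    refine ⟨u', v + 4 * P * δ, w,
      Int.modEq_iff_dvd.mpr ⟨-(t * s) - 2 * P * t ^ 2 * a, h₁'⟩,
      Int.modEq_iff_dvd.mpr ⟨q, ?_⟩, hau'⟩
    linear_combination hm + 8 * P * hq

namespace NondegenerateSolution

variable {a c d : ℤ} {p : ℕ} {n P u v w z : ℤ}

theorem of_dvd {m : ℤ} (hmn : m ∣ n) (h : NondegenerateSolution a c d p n u v w z) :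
    NondegenerateSolution a c d p m u v w z :=
  ⟨h.1.of_dvd hmn, h.2.1.of_dvd hmn, h.2.2⟩

theorem of_mul {g : ℤ} (hg : IsCoprime g n)
    (h : NondegenerateSolution a c d p n (g * u) (g * v) (g * w) (g * z)) :
    NondegenerateSolution a c d p n u v w z := by
  obtain ⟨h₁, h₂, h₃⟩ := h
  have hg₂ : IsCoprime n (g ^ 2) := hg.symm.pow_right
  refine ⟨Int.modEq_iff_dvd.mpr (hg₂.dvd_of_dvd_mul_left ?_),
    Int.modEq_iff_dvd.mpr (hg₂.dvd_of_dvd_mul_left ?_), ?_⟩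
  · exact h₁.dvd.trans (dvd_of_eq (by ring))
  · exact h₂.dvd.trans (dvd_of_eq (by ring))
  · have unscale (x y : ℤ) : ¬ (p : ℤ) ∣ x * (g * y) → ¬ (p : ℤ) ∣ x * y :=
      mt fun hxy => hxy.trans (mul_dvd_mul_left x (dvd_mul_left y g))
    exact h₃.imp (unscale a u) (Or.imp (unscale c w) (unscale d z))

theorem exists_strongSolution (hp : p.Prime) {k : ℕ}
    (h : NondegenerateSolution a c d p (p ^ k) u v w z) :
    ∃ u' v' w' z', StrongSolution a c d p (p ^ k) u' v' w' z' := by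
  obtain ⟨u₀, v₀, w₀, z₀, hprim, hu, hv, hw, hz⟩ := exists_gcd_gcd_gcd_eq_one u v w z
  set g : ℤ := ↑(u.gcd (v.gcd (w.gcd z)))
  rw [hu, hv, hw, hz] at h
  have hpg : ¬ (p : ℤ) ∣ g := by
    intro hpg
    have scale (x y : ℤ) : (p : ℤ) ∣ x * (g * y) := (hpg.mul_right y).mul_left x
    rcases h.2.2 with h' | h' | h' <;> exact h' (scale _ _)
  have hcop : IsCoprime g ((p : ℤ) ^ k) :=
    ((Prime.coprime_iff_not_dvd (Nat.prime_iff_prime_int.mp hp)).mpr hpg).symm.pow_right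
  exact ⟨u₀, v₀, w₀, z₀, hprim, h.of_mul hcop⟩

theorem odd_mul_or_odd_mul (h : NondegenerateSolution a c d 2 n u v w z) (hn : 2 ∣ n) :
    Odd (a * u) ∨ Odd (c * w) := by
  by_contra! hev
  simp only [Int.not_odd_iff_even] at hev
  obtain ⟨hau, hcw⟩ := hev
  have hdz : Odd (d * z) := by
    rcases h.2.2 with h' | h' | h'
    · exact absurd hau.two_dvd h'
    · exact absurd hcw.two_dvd h'
    · exact Int.odd_iff.mpr (Int.two_dvd_ne_zero.mp h')
  obtain ⟨s, hs⟩ := hau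
  obtain ⟨t, ht⟩ := hcw
  obtain ⟨q, hq⟩ := hn.trans h.1.dvd
  obtain ⟨r, hr⟩ := (Int.odd_mul.mp hdz).2
  obtain ⟨e, he⟩ := hdz
  have : (1 : ℤ) = 2 * (q - 2 * e * r - e - r + s * u + t * w) := by
    linear_combination hq - z * he - (2 * e + 1) * hr + u * hs + w * ht
  omega

theorem exists_lift (h : NondegenerateSolution a c d 2 (16 * P) u v w z) :
    ∃ u' v' w' z', NondegenerateSolution a c d 2 (32 * P) u' v' w' z' := by
  rcases h.odd_mul_or_odd_mul ⟨8 * P, by ring⟩ with hau | hcw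
  · obtain ⟨u', v', w', h₁, h₂, hau'⟩ := exists_lift_of_odd_mul hau h.1 h.2.1
    exact ⟨u', v', w', z, h₁, h₂, Or.inl (Int.two_dvd_ne_zero.mpr (Int.odd_iff.mp hau'))⟩
  · obtain ⟨w', v', u', h₁, h₂, hcw'⟩ :=
      exists_lift_of_odd_mul (c := a) hcw (by rw [add_comm]; exact h.1)
        (by rw [mul_comm w u]; exact h.2.1)
    exact ⟨u', v', w', z, by rw [add_comm]; exact h₁, by rw [mul_comm u' w']; exact h₂,
      Or.inr (Or.inl (Int.two_dvd_ne_zero.mpr (Int.odd_iff.mp hcw')))⟩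

theorem exists_two_pow (h : NondegenerateSolution a c d 2 16 u v w z) (k : ℕ) :
    ∃ u' v' w' z', NondegenerateSolution a c d 2 (2 ^ k) u' v' w' z' := by
  have lift (j : ℕ) :
      ∃ u' v' w' z', NondegenerateSolution a c d 2 (16 * 2 ^ j) u' v' w' z' := by
    induction j with
    | zero => exact ⟨u, v, w, z, by simpa using h⟩
    | succ j ih =>
      obtain ⟨u', v', w', z', h'⟩ := ih
      rw [pow_succ, mul_comm _ 2, ← mul_assoc]
      exact h'.exists_lift
  obtain ⟨u', v', w', z', h'⟩ := lift k
  exact ⟨u', v', w', z', h'.of_dvd (dvd_mul_left _ _)⟩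

end NondegenerateSolution

theorem stmt11_general (a c d : ℤ)
    (h : ∃ u v w z : ℤ, StrongSolution a c d 2 16 u v w z) :
    ∀ k : ℕ, 1 ≤ k → ∃ u v w z : ℤ, StrongSolution a c d 2 (2 ^ k) u v w z := by
  intro k _
  obtain ⟨u, v, w, z, -, hsol⟩ := h
  obtain ⟨u', v', w', z', hsol'⟩ := NondegenerateSolution.exists_two_pow hsol k
  exact hsol'.exists_strongSolution Nat.prime_two

theorem stmt11 (a c d : ℤ) (ha : a ≠ 0) (hc : c ≠ 0) (hd : d ≠ 0)
    (h : ∃ u v w z : ℤ, StrongSolution a c d 2 16 u v w z) :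
    ∀ k : ℕ, 1 ≤ k → ∃ u v w z : ℤ, StrongSolution a c d 2 (2 ^ k) u v w z :=
  stmt11_general a c d h
end

section
/- Let p be a prime, k ≥ 2, and a, c, d integers with p² ∤ a·c·d. Then every primitive solution modulo p^k of the system a·U² + c·W² = d·Z², U·W = V² is a strong solution: at least one of a·u, c·w, d·z is not divisible by p. -/
/-!
Reduce modulo `p²`. Since `p² ∤ acd`, the prime `p` divides at most one of `a, c, d`, so if
`p` divides each of `au, cw, dz` it divides at least two of `u, w, z`. The corresponding two
terms of `au² + cw² - dz²` vanish modulo `p²`, hence so does the third, and as its coefficient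
is not divisible by `p²` the prime `p` divides the remaining variable too. Then `p² ∣ uw ≡ v²`
gives `p ∣ v`, contradicting primitivity.
-/

section

variable {R : Type*} [CommRing R] [IsDomain R] {q : R}

theorem Prime.dvd_of_sq_dvd_mul_sq (hq : Prime q) {x y : R} (hx : ¬ q ^ 2 ∣ x)
    (h : q ^ 2 ∣ x * y ^ 2) : q ∣ y := by
  by_contra hy
  exact hx (hq.pow_dvd_of_dvd_mul_right 2 (fun h' => hy (hq.dvd_of_dvd_pow h')) h)

theorem Prime.dvd_of_sq_dvd_add_mul_sq (hq : Prime q) {x y x₁ y₁ x₂ y₂ : R}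
    (hx : ¬ q ^ 2 ∣ x) (hy₁ : q ∣ y₁) (hy₂ : q ∣ y₂)
    (h : q ^ 2 ∣ x * y ^ 2 + x₁ * y₁ ^ 2 + x₂ * y₂ ^ 2) : q ∣ y := by
  have h₁ : q ^ 2 ∣ x₁ * y₁ ^ 2 := (pow_dvd_pow_of_dvd hy₁ 2).mul_left x₁
  have h₂ : q ^ 2 ∣ x₂ * y₂ ^ 2 := (pow_dvd_pow_of_dvd hy₂ 2).mul_left x₂
  rw [add_assoc] at h
  exact hq.dvd_of_sq_dvd_mul_sq hx ((dvd_add_left (dvd_add h₁ h₂)).mp h)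

theorem Prime.dvd_of_sq_dvd_sum_mul_sq (hq : Prime q) {x₁ y₁ x₂ y₂ x₃ y₃ : R}
    (hx : ¬ q ^ 2 ∣ x₁ * x₂ * x₃)
    (h₁ : q ∣ x₁ * y₁) (h₂ : q ∣ x₂ * y₂) (h₃ : q ∣ x₃ * y₃)
    (h : q ^ 2 ∣ x₁ * y₁ ^ 2 + x₂ * y₂ ^ 2 + x₃ * y₃ ^ 2) :
    q ∣ y₁ ∧ q ∣ y₂ ∧ q ∣ y₃ := by
  have hx₁ : ¬ q ^ 2 ∣ x₁ := fun hd => hx ((hd.mul_right x₂).mul_right x₃)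
  have hx₂ : ¬ q ^ 2 ∣ x₂ := fun hd => hx ((hd.mul_left x₁).mul_right x₃)
  have hx₃ : ¬ q ^ 2 ∣ x₃ := fun hd => hx (hd.mul_left _)
  have hx₁₂ : ¬ (q ∣ x₁ ∧ q ∣ x₂) := fun ⟨h₁, h₂⟩ =>
    hx ((pow_two q ▸ mul_dvd_mul h₁ h₂).mul_right x₃)
  have hx₁₃ : ¬ (q ∣ x₁ ∧ q ∣ x₃) := fun ⟨h₁, h₃⟩ =>
    hx (by rw [mul_right_comm]; exact (pow_two q ▸ mul_dvd_mul h₁ h₃).mul_right x₂)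
  have hx₂₃ : ¬ (q ∣ x₂ ∧ q ∣ x₃) := fun ⟨h₂, h₃⟩ =>
    hx (by rw [mul_assoc]; exact (pow_two q ▸ mul_dvd_mul h₂ h₃).mul_left x₁)
  rcases hq.dvd_or_dvd h₁ with hqx₁ | hy₁ <;> rcases hq.dvd_or_dvd h₂ with hqx₂ | hy₂ <;>
    rcases hq.dvd_or_dvd h₃ with hqx₃ | hy₃
  · exact absurd ⟨hqx₁, hqx₂⟩ hx₁₂
  · exact absurd ⟨hqx₁, hqx₂⟩ hx₁₂
  · exact absurd ⟨hqx₁, hqx₃⟩ hx₁₃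
  · exact ⟨hq.dvd_of_sq_dvd_add_mul_sq hx₁ hy₂ hy₃ h, hy₂, hy₃⟩
  · exact absurd ⟨hqx₂, hqx₃⟩ hx₂₃
  · refine ⟨hy₁, hq.dvd_of_sq_dvd_add_mul_sq (x₁ := x₁) (x₂ := x₃) hx₂ hy₁ hy₃ ?_,
      hy₃⟩
    convert h using 1; ring
  · refine ⟨hy₁, hy₂,
      hq.dvd_of_sq_dvd_add_mul_sq (x₁ := x₁) (x₂ := x₂) hx₃ hy₁ hy₂ ?_⟩
    convert h using 1; ring
  · exact ⟨hy₁, hy₂, hy₃⟩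

end

theorem stmt12 (p : ℕ) (hp : p.Prime) (k : ℕ) (hk : 2 ≤ k) (a c d : ℤ)
    (h2 : ¬ (p : ℤ) ^ 2 ∣ a * c * d) (u v w z : ℤ)
    (hprim : Int.gcd u (Int.gcd v (Int.gcd w z)) = 1)
    (h1 : a * u ^ 2 + c * w ^ 2 ≡ d * z ^ 2 [ZMOD ((p : ℤ) ^ k)])
    (huv : u * w ≡ v ^ 2 [ZMOD ((p : ℤ) ^ k)]) :
    ¬ (p : ℤ) ∣ a * u ∨ ¬ (p : ℤ) ∣ c * w ∨ ¬ (p : ℤ) ∣ d * z := by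
  by_contra! ⟨hau, hcw, hdz⟩
  have hq : Prime (p : ℤ) := Nat.prime_iff_prime_int.mp hp
  have hsq : (p : ℤ) ^ 2 ∣ (p : ℤ) ^ k := pow_dvd_pow _ hk
  have hsum : (p : ℤ) ^ 2 ∣ a * u ^ 2 + c * w ^ 2 + (-d) * z ^ 2 := by
    rw [neg_mul, ← sub_eq_add_neg]
    exact (h1.of_dvd hsq).symm.dvd
  obtain ⟨hu, hw, hz⟩ := hq.dvd_of_sq_dvd_sum_mul_sq (x₃ := -d)
    (by rwa [mul_neg, dvd_neg]) hau hcw (by rwa [neg_mul, dvd_neg]) hsum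
  have hv : (p : ℤ) ∣ v :=
    hq.dvd_of_dvd_pow ((huv.of_dvd (dvd_pow_self _ (by omega))).dvd_iff.mp (hu.mul_right w))
  have hone : (p : ℤ) ∣ 1 := by
    simpa [hprim] using Int.dvd_coe_gcd hu (Int.dvd_coe_gcd hv (Int.dvd_coe_gcd hw hz))
  exact hq.not_dvd_one hone
end

section
/- Let d be a nonzero square-free integer and q a prime with q ≡ 1 (mod 8) and q ∤ d. If the system U² − q·W² = d·Z², U·W = V² has a nontrivial integer solution, then d is a fourth power modulo q. -/
/-!
Multiplying `u² - q w² = d z²` by `w²` and using `u w = v²` gives `v⁴ - q w⁴ = d (z w)²`;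
dividing out `gcd v w` (possible because `d` is squarefree) yields coprime `a, c` and some `b`
with `a⁴ - q c⁴ = d b²`, where `q ∤ a b`. Every odd prime `p ∣ b` sees `q ≡ (a / c)⁴` as a square
mod `p`, hence is a square mod `q` by quadratic reciprocity (`q ≡ 1 mod 4`); `2` and `-1` are
squares mod `q` since `q ≡ 1 mod 8`. So `b ≡ r²` mod `q`, and `d ≡ (a / r)⁴`.
-/

theorem Squarefree.dvd_of_sq_dvd_mul_sq {d s t : ℤ} (hd : Squarefree d) (h : s ^ 2 ∣ d * t ^ 2) :
    s ∣ t := by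
  rcases eq_or_ne (Int.gcd s t) 0 with h0 | h0
  · rw [(Int.gcd_eq_zero_iff.mp h0).2]
    exact dvd_zero s
  obtain ⟨g, s', t', hg, hst, rfl, rfl⟩ := Int.exists_gcd_one' (Nat.pos_of_ne_zero h0)
  have hg2 : (g : ℤ) ^ 2 ≠ 0 := by positivity
  have hs't' : s' ^ 2 ∣ d * t' ^ 2 :=
    (mul_dvd_mul_iff_right hg2).mp (by simpa only [mul_pow, mul_assoc] using h)
  have hs'd : s' ^ 2 ∣ d := (Int.isCoprime_iff_gcd_eq_one.mpr hst).pow.dvd_of_dvd_mul_right hs't'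
  exact mul_dvd_mul_right ((hd s' (sq s' ▸ hs'd)).dvd) _

theorem Squarefree.eq_one_of_sq_eq_mul_sq {d u z : ℤ} (hd : Squarefree d) (hz : z ≠ 0)
    (h : u ^ 2 = d * z ^ 2) : d = 1 := by
  have huz : u ∣ z := hd.dvd_of_sq_dvd_mul_sq (dvd_of_eq h)
  have hzu : z ∣ u := (Int.pow_dvd_pow_iff two_ne_zero).mp ⟨d, by rw [h]; ring⟩
  have hsq : u ^ 2 = z ^ 2 := Int.natAbs_eq_iff_sq_eq.mp (Int.natAbs_eq_of_dvd_dvd huz hzu)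
  exact mul_right_cancel₀ (pow_ne_zero 2 hz) (by rw [← h, hsq, one_mul])

theorem exists_coprime_pow_four_sub_mul_pow_four_eq {d k v w t : ℤ} (hd : Squarefree d)
    (hw : w ≠ 0) (h : v ^ 4 - k * w ^ 4 = d * t ^ 2) :
    ∃ a c b : ℤ, IsCoprime a c ∧ a ^ 4 - k * c ^ 4 = d * b ^ 2 := by
  obtain ⟨g, a, c, hg, hac, rfl, rfl⟩ := Int.exists_gcd_one' (Int.gcd_pos_of_ne_zero_right v hw)
  have hgt : ((g : ℤ) ^ 2) ^ 2 ∣ d * t ^ 2 := ⟨a ^ 4 - k * c ^ 4, by rw [← h]; ring⟩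
  obtain ⟨b, rfl⟩ := hd.dvd_of_sq_dvd_mul_sq hgt
  refine ⟨a, c, b, Int.isCoprime_iff_gcd_eq_one.mpr hac, ?_⟩
  have hg4 : (g : ℤ) ^ 4 ≠ 0 := by positivity
  exact mul_left_cancel₀ hg4 (by linear_combination h)

theorem Prime.not_dvd_of_pow_four_sub_mul_pow_four_eq {p d a b c : ℤ} (hp : Prime p)
    (hpd : ¬ p ∣ d) (hac : IsCoprime a c) (h : a ^ 4 - p * c ^ 4 = d * b ^ 2) : ¬ p ∣ a := by
  rintro ⟨a, rfl⟩
  have hpb : p ∣ b :=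
    hp.dvd_of_dvd_pow ((hp.dvd_mul.mp ⟨p ^ 3 * a ^ 4 - c ^ 4, by rw [← h]; ring⟩).resolve_left hpd)
  obtain ⟨b, rfl⟩ := hpb
  have hc4 : p * c ^ 4 = p * (p * (p ^ 2 * a ^ 4 - d * b ^ 2)) := by linear_combination -h
  have hpc : p ∣ c := hp.dvd_of_dvd_pow ⟨_, mul_left_cancel₀ hp.ne_zero hc4⟩
  exact hp.not_isUnit (hac.isUnit_of_dvd' (dvd_mul_right p a) hpc)

theorem Prime.dvd_of_pow_four_sub_mul_pow_four_eq {p d k a b c : ℤ} (hp : Prime p)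
    (h : a ^ 4 - k * c ^ 4 = d * b ^ 2) (hkc : p ∣ k * c ^ 4) (hpb : p ∣ b) : p ∣ a := by
  refine hp.dvd_of_dvd_pow (n := 4) ?_
  rw [show a ^ 4 = k * c ^ 4 + d * b ^ 2 by linear_combination h]
  exact dvd_add hkc (dvd_mul_of_dvd_right (dvd_pow hpb two_ne_zero) _)

theorem eq_div_pow_of_pow_eq_mul_pow {K : Type*} [Field K] {x y k : K} {n : ℕ} (hy : y ≠ 0)
    (h : x ^ n = k * y ^ n) : k = (x / y) ^ n := by
  rw [div_pow, h]
  field_simp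

theorem isSquare_natCast_of_forall_prime_dvd {R : Type*} [CommSemiring R] {n : ℕ}
    (h : ∀ p : ℕ, p.Prime → p ∣ n → IsSquare (p : R)) : IsSquare (n : R) := by
  induction n using induction_on_primes with
  | zero => simp
  | one => simp
  | prime_mul p a hp ih =>
    push_cast
    exact (h p hp (dvd_mul_right p a)).mul
      (ih fun r hr hra => h r hr (dvd_mul_of_dvd_right hra p))

theorem isSquare_intCast_of_forall_prime_dvd {R : Type*} [CommRing R] (hneg : IsSquare (-1 : R))
    {b : ℤ} (h : ∀ p : ℕ, p.Prime → (p : ℤ) ∣ b → IsSquare (p : R)) : IsSquare (b : R) := by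
  have habs : IsSquare (b.natAbs : R) :=
    isSquare_natCast_of_forall_prime_dvd fun p hp hpb => h p hp (Int.natCast_dvd.mpr hpb)
  rcases Int.natAbs_eq b with hb | hb <;> rw [hb]
  · rwa [Int.cast_natCast]
  · simpa using hneg.mul habs

section PrimitiveSolution

variable {q : ℕ} [Fact q.Prime] {d a b c : ℤ}

theorem isSquare_natCast_of_dvd_of_pow_four_sub_mul_pow_four_eq (hq8 : q % 8 = 1)
    (hac : IsCoprime a c) (h : a ^ 4 - q * c ^ 4 = d * b ^ 2) {p : ℕ} (hp : p.Prime)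
    (hpb : (p : ℤ) ∣ b) : IsSquare (p : ZMod q) := by
  have hq2 : q ≠ 2 := by omega
  rcases eq_or_ne p 2 with rfl | hp2
  · exact_mod_cast (ZMod.exists_sq_eq_two_iff hq2).mpr (Or.inl hq8)
  have := Fact.mk hp
  have hpZ : Prime (p : ℤ) := Nat.prime_iff_prime_int.mp hp
  have hpc : ¬ (p : ℤ) ∣ c := fun hpc =>
    have hpa := hpZ.dvd_of_pow_four_sub_mul_pow_four_eq h
      (dvd_mul_of_dvd_right (dvd_pow hpc four_ne_zero) _) hpb
    hpZ.not_isUnit (hac.isUnit_of_dvd' hpa hpc)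
  have hcast : (a : ZMod p) ^ 4 = (q : ZMod p) * (c : ZMod p) ^ 4 := by
    have := congrArg (Int.cast : ℤ → ZMod p) h
    push_cast at this
    rw [(ZMod.intCast_zmod_eq_zero_iff_dvd b p).mpr hpb] at this
    linear_combination this
  have hcp : (c : ZMod p) ≠ 0 := mt (ZMod.intCast_zmod_eq_zero_iff_dvd c p).mp hpc
  have hqp : IsSquare (q : ZMod p) :=
    ⟨(a / c : ZMod p) ^ 2, by rw [eq_div_pow_of_pow_eq_mul_pow hcp hcast]; ring⟩
  exact (ZMod.exists_sq_eq_prime_iff_of_mod_four_eq_one (by omega) hp2).mpr hqp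

theorem exists_pow_four_eq_of_pow_four_sub_mul_pow_four_eq (hq8 : q % 8 = 1)
    (hqd : ¬ (q : ℤ) ∣ d) (hac : IsCoprime a c) (h : a ^ 4 - q * c ^ 4 = d * b ^ 2) :
    ∃ x : ZMod q, x ^ 4 = d := by
  have hq : Prime (q : ℤ) := Nat.prime_iff_prime_int.mp Fact.out
  have hqa := hq.not_dvd_of_pow_four_sub_mul_pow_four_eq hqd hac h
  have hqb : ¬ (q : ℤ) ∣ b := fun hqb =>
    hqa (hq.dvd_of_pow_four_sub_mul_pow_four_eq h (dvd_mul_right _ _) hqb)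
  have hneg : IsSquare (-1 : ZMod q) := ZMod.exists_sq_eq_neg_one_iff.mpr (by omega)
  obtain ⟨r, hr⟩ := isSquare_intCast_of_forall_prime_dvd hneg fun p hp hpb =>
    isSquare_natCast_of_dvd_of_pow_four_sub_mul_pow_four_eq hq8 hac h hp hpb
  have hr0 : r ≠ 0 := by
    rintro rfl
    exact hqb ((ZMod.intCast_zmod_eq_zero_iff_dvd b q).mp (by simpa using hr))
  have hcast : (a : ZMod q) ^ 4 = (d : ZMod q) * r ^ 4 := by
    have := congrArg (Int.cast : ℤ → ZMod q) h
    push_cast at this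
    rw [ZMod.natCast_self, hr] at this
    linear_combination this
  exact ⟨a / r, (eq_div_pow_of_pow_eq_mul_pow hr0 hcast).symm⟩

end PrimitiveSolution

theorem ZMod.exists_intCast_pow_modEq_of_exists_pow_eq {n k : ℕ} {d : ℤ}
    (h : ∃ x : ZMod n, x ^ k = d) : ∃ m : ℤ, m ^ k ≡ d [ZMOD n] := by
  obtain ⟨x, hx⟩ := h
  obtain ⟨m, rfl⟩ := ZMod.intCast_surjective x
  exact ⟨m, (ZMod.intCast_eq_intCast_iff _ _ _).mp (by push_cast; exact hx)⟩

theorem stmt13_general (d : ℤ) (hsf : Squarefree d) (q : ℕ) (hq : q.Prime)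
    (hq8 : q ≡ 1 [MOD 8]) (hqd : ¬ (q : ℤ) ∣ d)
    (h : ∃ u v w z : ℤ, ¬(u = 0 ∧ v = 0 ∧ w = 0 ∧ z = 0) ∧
      u ^ 2 - q * w ^ 2 = d * z ^ 2 ∧ u * w = v ^ 2) :
    ∃ m : ℤ, m ^ 4 ≡ d [ZMOD (q : ℤ)] := by
  obtain ⟨u, v, w, z, hnt, huw, hv⟩ := h
  rcases eq_or_ne w 0 with rfl | hw
  · have hz : z ≠ 0 := by
      rintro rfl
      have hu : u = 0 := by simpa using huw
      have hv0 : v = 0 := by simpa using hv.symm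
      exact hnt ⟨hu, hv0, rfl, rfl⟩
    exact ⟨1, by rw [hsf.eq_one_of_sq_eq_mul_sq (u := u) hz (by linear_combination huw)]; rfl⟩
  have := Fact.mk hq
  obtain ⟨a, c, b, hac, habc⟩ :=
    exists_coprime_pow_four_sub_mul_pow_four_eq (k := q) (v := v) (t := z * w) hsf hw
      (by linear_combination w ^ 2 * huw - (u * w + v ^ 2) * hv)
  exact ZMod.exists_intCast_pow_modEq_of_exists_pow_eq
    (exists_pow_four_eq_of_pow_four_sub_mul_pow_four_eq hq8 hqd hac habc)

theorem stmt13 (d : ℤ) (hd : d ≠ 0) (hsf : Squarefree d) (q : ℕ) (hq : q.Prime)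
    (hq8 : q ≡ 1 [MOD 8]) (hqd : ¬ (q : ℤ) ∣ d)
    (h : ∃ u v w z : ℤ, ¬(u = 0 ∧ v = 0 ∧ w = 0 ∧ z = 0) ∧
      u ^ 2 - q * w ^ 2 = d * z ^ 2 ∧ u * w = v ^ 2) :
    ∃ m : ℤ, m ^ 4 ≡ d [ZMOD (q : ℤ)] :=
  stmt13_general d hsf q hq hq8 hqd h
end

section
/- Let R be an integral domain and a, b, c, d ∈ R. The system a·U² + b·V² + c·W² = d·Z², U·W = V² has a nontrivial R-solution if and only if the equation a·X⁴ + b·X²·Y² + c·Y⁴ = d·Z² has a nontrivial R-solution. -/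
/-! On the conic `U W = V²` every point with `U ≠ 0` is `(X², X Y, Y²)` up to the scalar `U`:
with `(X, Y) = (U, V)` one has `U² · (U, V, W) = (U², U V, V²)`, so multiplying the quadric equation
by `U²` turns it into the quartic one with `Z` replaced by `U Z`; symmetrically when `W ≠ 0`.
If `U = W = 0` then `V = 0` too, and `(0, 0, Z)` solves both equations. Conversely `(X², X Y, Y², Z)`
lies on the conic and turns the quartic equation into the quadric one. -/

theorem quartic_eq_of_conic {R : Type*} [CommRing R] {a b c d u v w z : R}
    (hconic : a * u ^ 2 + b * v ^ 2 + c * w ^ 2 = d * z ^ 2) (hvw : u * w = v ^ 2) :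
    a * u ^ 4 + b * u ^ 2 * v ^ 2 + c * v ^ 4 = d * (u * z) ^ 2 := by
  linear_combination u ^ 2 * hconic - c * (u * w + v ^ 2) * hvw

theorem stmt17 (R : Type*) [CommRing R] [IsDomain R] (a b c d : R) :
    (∃ u v w z : R, ¬(u = 0 ∧ v = 0 ∧ w = 0 ∧ z = 0) ∧
      a * u ^ 2 + b * v ^ 2 + c * w ^ 2 = d * z ^ 2 ∧ u * w = v ^ 2) ↔
    (∃ x y z : R, ¬(x = 0 ∧ y = 0 ∧ z = 0) ∧
      a * x ^ 4 + b * x ^ 2 * y ^ 2 + c * y ^ 4 = d * z ^ 2) := by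
  constructor
  · rintro ⟨u, v, w, z, hnt, hconic, hvw⟩
    by_cases hu : u = 0
    · by_cases hw : w = 0
      · have hv : v = 0 := pow_eq_zero_iff two_ne_zero |>.mp (by rw [← hvw, hu, zero_mul])
        subst hu hv hw
        exact ⟨0, 0, z, fun h => hnt ⟨rfl, rfl, rfl, h.2.2⟩, by linear_combination hconic⟩
      · refine ⟨v, w, w * z, fun h => hw h.2.1, ?_⟩
        have hconic' : c * w ^ 2 + b * v ^ 2 + a * u ^ 2 = d * z ^ 2 := by
          linear_combination hconic
        linear_combination quartic_eq_of_conic hconic' (by rw [mul_comm, hvw])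
    · exact ⟨u, v, u * z, fun h => hu h.1, quartic_eq_of_conic hconic hvw⟩
  · rintro ⟨x, y, z, hnt, hquartic⟩
    refine ⟨x ^ 2, x * y, y ^ 2, z, ?_, by linear_combination hquartic, by ring⟩
    rintro ⟨hx, -, hy, hz⟩
    exact hnt ⟨pow_eq_zero_iff two_ne_zero |>.mp hx, pow_eq_zero_iff two_ne_zero |>.mp hy, hz⟩
end

section
/- Let p be a prime not dividing 2·a·c·(b² − 4·a·c), where a, b, c are integers. If f(T) = a·T⁴ + b·T² + c has a root modulo p, then f has a root in the p-adic integers ℤ_p. -/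
/-!
At a root `t` of `f = aT⁴ + bT² + c` modulo `p`, the derivative `f'(t) = 2t(2at² + b)` is a unit
modulo `p`: `p ∣ t` would give `p ∣ c`, and `p ∣ 2at² + b` would give `p ∣ b² - 4ac` because
`(2at² + b)² = 4a·f(t) + (b² - 4ac)`. So `t` is a simple root and Hensel's lemma lifts it to `ℤ_p`.
-/

open Polynomial

theorem PadicInt.exists_aeval_eq_zero_of_dvd_eval {p : ℕ} [Fact p.Prime] (f : ℤ[X]) (t : ℤ)
    (hroot : (p : ℤ) ∣ f.eval t) (hsimple : ¬ (p : ℤ) ∣ f.derivative.eval t) :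
    ∃ x : ℤ_[p], aeval x f = 0 := by
  have haeval (g : ℤ[X]) : aeval (t : ℤ_[p]) g = ((g.eval t : ℤ) : ℤ_[p]) := by
    simpa using aeval_algebraMap_apply_eq_algebraMap_eval (R := ℤ) (A := ℤ_[p]) t g
  have hval : ‖aeval (t : ℤ_[p]) f‖ < 1 := by
    rw [haeval, PadicInt.norm_int_lt_one_iff_dvd]
    exact hroot
  have hderiv : ‖aeval (t : ℤ_[p]) f.derivative‖ = 1 := by
    rw [haeval]
    refine le_antisymm (PadicInt.norm_le_one _) (not_lt.mp ?_)
    rwa [PadicInt.norm_int_lt_one_iff_dvd]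
  obtain ⟨x, hx, -⟩ := hensels_lemma (F := f) (a := (t : ℤ_[p])) (by rwa [hderiv, one_pow])
  exact ⟨x, hx⟩

theorem not_dvd_biquadratic_derivative {R : Type*} [CommRing R] {q a b c t : R} (hq : Prime q)
    (h2 : ¬ q ∣ 2) (hc : ¬ q ∣ c) (hdisc : ¬ q ∣ b ^ 2 - 4 * a * c)
    (hroot : q ∣ a * t ^ 4 + b * t ^ 2 + c) :
    ¬ q ∣ 4 * a * t ^ 3 + 2 * b * t := by
  rw [show 4 * a * t ^ 3 + 2 * b * t = 2 * t * (2 * a * t ^ 2 + b) by ring]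
  intro hdvd
  rcases hq.dvd_mul.mp hdvd with h2t | hvertex
  · rcases hq.dvd_mul.mp h2t with h2' | ht
    · exact h2 h2'
    · have hquartic : q ∣ a * t ^ 4 + b * t ^ 2 :=
        dvd_add ((ht.pow four_ne_zero).mul_left a) ((ht.pow two_ne_zero).mul_left b)
      exact hc ((dvd_add_right hquartic).mp hroot)
  · have hsq : q ∣ 4 * a * (a * t ^ 4 + b * t ^ 2 + c) + (b ^ 2 - 4 * a * c) := by
      rw [show 4 * a * (a * t ^ 4 + b * t ^ 2 + c) + (b ^ 2 - 4 * a * c)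
          = (2 * a * t ^ 2 + b) ^ 2 by ring]
      exact hvertex.pow two_ne_zero
    exact hdisc ((dvd_add_right (hroot.mul_left _)).mp hsq)

theorem stmt18 (p : ℕ) [Fact p.Prime] (a b c : ℤ)
    (hp : ¬ (p : ℤ) ∣ 2 * a * c * (b ^ 2 - 4 * a * c))
    (h : ∃ t : ℤ, a * t ^ 4 + b * t ^ 2 + c ≡ 0 [ZMOD (p : ℤ)]) :
    ∃ x : ℤ_[p], (a : ℤ_[p]) * x ^ 4 + (b : ℤ_[p]) * x ^ 2 + (c : ℤ_[p]) = 0 := by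
  obtain ⟨t, ht⟩ := h
  set f : ℤ[X] := C a * X ^ 4 + C b * X ^ 2 + C c
  have hroot : (p : ℤ) ∣ f.eval t := by
    simpa [f] using ht.symm.dvd
  have hsimple : ¬ (p : ℤ) ∣ f.derivative.eval t := by
    have hderiv : f.derivative.eval t = 4 * a * t ^ 3 + 2 * b * t := by
      simp only [f, derivative_add, derivative_C_mul_X_pow, derivative_C, eval_add, eval_mul,
        eval_C, eval_pow, eval_X, eval_zero]
      push_cast
      ring
    rw [hderiv]
    refine not_dvd_biquadratic_derivative (Nat.prime_iff_prime_int.mp Fact.out)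
      (fun h2 => hp ?_) (fun hc => hp ?_) (fun hdisc => hp ?_) (by simpa [f] using hroot)
    · exact ((h2.mul_right a).mul_right c).mul_right _
    · exact (hc.mul_left _).mul_right _
    · exact hdisc.mul_left _
  obtain ⟨x, hx⟩ := PadicInt.exists_aeval_eq_zero_of_dvd_eval f t hroot hsimple
  exact ⟨x, by simpa [f] using hx⟩
end

section
/- Let p be an odd prime and a, b, c, d ∈ F_p with a·c·d·(b² − 4·a·c) ≠ 0. Then the system a·U² + b·V² + c·W² = d·Z², U·W = V² has a nontrivial solution in F_p⁴. -/
/-!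
On the conic `U W = V²` take the points `(0, 0, 1, z)` and `(1, t, t², x)`: it suffices that `c = d z²`
for some `z`, or that `a + b t² + c t⁴ = d x²` for some `t, x`. Let `χ` be the quadratic character.
Completing the square and counting the points of the hyperbola `t² - u² = e` gives
`∑ y, χ (c y² + b y + a) = -χ c`; so if `c / d` is a nonsquare, `g y = (c y² + b y + a) / d` has
`∑ y, χ (g y) = 1`. If `g y` were a nonsquare for every square `y`, then `χ (g y) ≤ -χ y` for all `y`,
and summing would give `∑ y, χ (g y) ≤ -∑ y, χ y = 0`.
-/

open Finset

variable {F : Type*} [Field F] [Fintype F]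

section QuadraticCharSums

variable [DecidableEq F]

lemma card_sq_sub_sq_eq (hF : ringChar F ≠ 2) {e : F} (he : e ≠ 0) :
    Fintype.card {x : F × F // x.1 ^ 2 - x.2 ^ 2 = e} = Fintype.card F - 1 := by
  have h2 : (2 : F) ≠ 0 := Ring.two_ne_zero hF
  have hne : ∀ x : F × F, x.1 ^ 2 - x.2 ^ 2 = e → x.1 + x.2 ≠ 0 := fun x hx h0 => by
    apply he
    rw [← hx, eq_neg_of_add_eq_zero_left h0]
    ring
  rw [← Fintype.card_units]
  refine Fintype.card_congr
    { toFun := fun x => Units.mk0 (x.1.1 + x.1.2) (hne x.1 x.2)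
      invFun := fun v => ⟨((v + e / v) / 2, (v - e / v) / 2), by field_simp; ring⟩
      left_inv := fun ⟨⟨t, u⟩, hx⟩ => ?_
      right_inv := fun v => ?_ }
  · have htu := hne _ hx
    have he' : e = (t + u) * (t - u) := by linear_combination -hx
    ext <;> simp only [Units.val_mk0] <;> rw [he'] <;> field_simp <;> ring
  · ext
    simp only [Units.val_mk0]
    field_simp
    ring

lemma sum_quadraticChar_sq_sub (hF : ringChar F ≠ 2) {e : F} (he : e ≠ 0) :
    ∑ t : F, quadraticChar F (t ^ 2 - e) = -1 := by
  have hfib : ∀ t : F, quadraticChar F (t ^ 2 - e) + 1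
      = Fintype.card {u : F // u ^ 2 = t ^ 2 - e} := fun t => by
    rw [← quadraticChar_card_sqrts hF, Set.toFinset_card]
    rfl
  have hsigma : (Σ t : F, {u : F // u ^ 2 = t ^ 2 - e}) ≃ {x : F × F // x.1 ^ 2 - x.2 ^ 2 = e} :=
    { toFun := fun x => ⟨(x.1, x.2.1), by linear_combination -x.2.2⟩
      invFun := fun x => ⟨x.1.1, x.1.2, by linear_combination -x.2⟩
      left_inv := fun _ => rfl
      right_inv := fun _ => rfl }
  have hcount : ∑ t : F, (quadraticChar F (t ^ 2 - e) + 1) = Fintype.card F - 1 := by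
    simp_rw [hfib]
    rw [← Nat.cast_sum, ← Fintype.card_sigma, Fintype.card_congr hsigma,
      card_sq_sub_sq_eq hF he, Nat.cast_sub Fintype.card_pos, Nat.cast_one]
  rw [sum_add_distrib, sum_const, card_univ, nsmul_one] at hcount
  linarith

lemma sum_quadraticChar_quadratic (hF : ringChar F ≠ 2) {a b c : F} (hc : c ≠ 0)
    (hD : b ^ 2 - 4 * a * c ≠ 0) :
    ∑ y : F, quadraticChar F (c * y ^ 2 + b * y + a) = -quadraticChar F c := by
  have h2 : (2 : F) ≠ 0 := Ring.two_ne_zero hF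
  set e := (b ^ 2 - 4 * a * c) / (2 * c) ^ 2 with he_def
  have he : e ≠ 0 := by positivity
  have hsq : ∀ y : F, c * y ^ 2 + b * y + a = c * ((y + b / (2 * c)) ^ 2 - e) := fun y => by
    rw [he_def]
    field_simp
    ring
  have hshift : ∑ y : F, quadraticChar F ((y + b / (2 * c)) ^ 2 - e)
      = ∑ t : F, quadraticChar F (t ^ 2 - e) :=
    Equiv.sum_comp (Equiv.addRight _) fun t => quadraticChar F (t ^ 2 - e)
  simp_rw [hsq, map_mul, ← mul_sum]
  rw [hshift, sum_quadraticChar_sq_sub hF he, mul_neg_one]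

lemma quadraticChar_le_neg_quadraticChar {x y : F} (h : IsSquare x → ¬IsSquare y) :
    quadraticChar F y ≤ -quadraticChar F x := by
  have hle : ∀ z : F, quadraticChar F z ≤ 1 := fun z => by
    rcases quadraticChar_isQuadratic F z with hz | hz | hz <;> rw [hz] <;> norm_num
  by_cases hx : IsSquare x
  · rw [quadraticChar_neg_one_iff_not_isSquare.mpr (h hx)]
    linarith [hle x]
  · rw [quadraticChar_neg_one_iff_not_isSquare.mpr hx]
    simpa using hle y

lemma exists_isSquare_isSquare_of_sum_quadraticChar_pos (hF : ringChar F ≠ 2) {g : F → F}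
    (hg : 0 < ∑ y : F, quadraticChar F (g y)) : ∃ y, IsSquare y ∧ IsSquare (g y) := by
  by_contra! hno
  have : ∑ y : F, quadraticChar F (g y) ≤ -∑ y : F, quadraticChar F y := by
    rw [← sum_neg_distrib]
    exact sum_le_sum fun y _ => quadraticChar_le_neg_quadraticChar (hno y)
  rw [quadraticChar_sum_zero hF] at this
  omega


lemma exists_quartic_eq_mul_sq (hF : ringChar F ≠ 2) {a b c d : F} (hc : c ≠ 0) (hd : d ≠ 0)
    (hD : b ^ 2 - 4 * a * c ≠ 0) (hcd : ¬IsSquare (d⁻¹ * c)) :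
    ∃ t x : F, a + b * t ^ 2 + c * t ^ 4 = d * x ^ 2 := by
  have hpos : 0 < ∑ y : F, quadraticChar F (d⁻¹ * (c * y ^ 2 + b * y + a)) := by
    simp_rw [map_mul (quadraticChar F) d⁻¹]
    rw [← mul_sum, sum_quadraticChar_quadratic hF hc hD, mul_neg, ← map_mul,
      quadraticChar_neg_one_iff_not_isSquare.mpr hcd, neg_neg]
    exact one_pos
  obtain ⟨_, ⟨t, rfl⟩, x, hx⟩ := exists_isSquare_isSquare_of_sum_quadraticChar_pos hF hpos
  refine ⟨t, x, ?_⟩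
  field_simp at hx
  linear_combination hx

end QuadraticCharSums

theorem exists_nontrivial_solution (hF : ringChar F ≠ 2) {a b c d : F} (hc : c ≠ 0) (hd : d ≠ 0)
    (hD : b ^ 2 - 4 * a * c ≠ 0) :
    ∃ u v w z : F, a * u ^ 2 + b * v ^ 2 + c * w ^ 2 = d * z ^ 2 ∧ u * w = v ^ 2 ∧
      ¬(u = 0 ∧ v = 0 ∧ w = 0 ∧ z = 0) := by
  classical
  by_cases hcd : IsSquare (d⁻¹ * c)
  · obtain ⟨z, hz⟩ := hcd
    refine ⟨0, 0, 1, z, ?_, by ring, fun h => one_ne_zero h.2.2.1⟩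
    field_simp at hz
    linear_combination hz
  · obtain ⟨t, x, htx⟩ := exists_quartic_eq_mul_sq hF hc hd hD hcd
    exact ⟨1, t, t ^ 2, x, by linear_combination htx, by ring, fun h => one_ne_zero h.1⟩

theorem stmt19 (p : ℕ) [Fact p.Prime] (hp : Odd p) (a b c d : ZMod p)
    (h : a * c * d * (b ^ 2 - 4 * a * c) ≠ 0) :
    ∃ u v w z : ZMod p,
      a * u ^ 2 + b * v ^ 2 + c * w ^ 2 = d * z ^ 2 ∧ u * w = v ^ 2 ∧
      ¬(u = 0 ∧ v = 0 ∧ w = 0 ∧ z = 0) := by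
  have hF : ringChar (ZMod p) ≠ 2 := by
    rw [ZMod.ringChar_zmod_n]
    rintro rfl
    exact Nat.not_odd_iff_even.mpr even_two hp
  obtain ⟨hacd, hD⟩ := mul_ne_zero_iff.mp h
  obtain ⟨hac, hd⟩ := mul_ne_zero_iff.mp hacd
  exact exists_nontrivial_solution hF (right_ne_zero_of_mul hac) hd hD
end
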